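/- arXiv:1111.0960 — 3 statements merged into one kernel-verified Lean document; each statement's English description precedes it below -/
import Mathlib

section
/- For every integer m ≥ 1 there exist real constants C₀, …, C_{⌊(m-1)/2⌋} with C₀ ≠ 0 such that for all h ∈ (0, 1/α²), ∫₀^{2π} dt / (1 - α √h sin t)^m = (1/r^{2m-1}) Σ_{j=0}^{⌊(m-1)/2⌋} C_j r^{2j}, where r = √(1 - α² h). -/
/-!
Put `J k = ∫₀^{2π} (1 - b sin t)⁻ᵏ dt` for `|b| < 1` and `r = √(1 - b²)`, so that the theorem is
the case `b = α √h`. The function `(t - 2 arctan (b cos t / (1 + r - b sin t))) / r` is a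
continuous antiderivative of `(1 - b sin t)⁻¹` on all of `ℝ` that grows by `2π / r` over a period,
so `J 1 = 2π / r`. Integrating the derivative of `b cos t / (1 - b sin t)^(n+1)` over a period gives
`(n + 1) r² J (n + 2) = (2n + 1) J (n + 1) - n J n`. Hence `r^(2n+1) J (n + 1) = Pₙ(r²)` for
polynomials with `P₀ = P₁ = 2π` and `(n + 2) Pₙ₊₂ = (2n + 3) Pₙ₊₁ - (n + 1) X Pₙ`; the recurrence
shows `deg Pₙ ≤ n / 2` and `Pₙ(0) > 0`.
-/

open Real intervalIntegral Polynomial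

lemma one_sub_mul_sin_pos {b : ℝ} (hb : |b| < 1) (t : ℝ) : 0 < 1 - b * sin t := by
  have : |b * sin t| ≤ |b| := by
    rw [abs_mul]; exact mul_le_of_le_one_right (abs_nonneg b) (abs_sin_le_one t)
  linarith [le_abs_self (b * sin t)]

lemma one_sub_sq_pos_of_abs_lt_one {b : ℝ} (hb : |b| < 1) : 0 < 1 - b ^ 2 :=
  sub_pos.2 ((sq_lt_one_iff_abs_lt_one b).2 hb)

lemma continuous_one_div_one_sub_mul_sin_pow {b : ℝ} (hb : |b| < 1) (k : ℕ) :
    Continuous fun t => 1 / (1 - b * sin t) ^ k :=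
  continuous_const.div (by fun_prop) fun t => (pow_pos (one_sub_mul_sin_pos hb t) k).ne'

noncomputable def sinDenomIntegral (b : ℝ) (k : ℕ) : ℝ :=
  ∫ t in (0 : ℝ)..2 * π, 1 / (1 - b * sin t) ^ k

lemma sinDenomIntegral_zero (b : ℝ) : sinDenomIntegral b 0 = 2 * π := by
  simp [sinDenomIntegral]

lemma hasDerivAt_antideriv_one_div_one_sub_mul_sin {b r : ℝ} (hb : |b| < 1) (hr : 0 < r)
    (hr2 : r ^ 2 = 1 - b ^ 2) (t : ℝ) :
    HasDerivAt (fun t => (t - 2 * arctan (b * cos t / (1 + r - b * sin t))) / r)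
      (1 / (1 - b * sin t)) t := by
  have hu : 0 < 1 - b * sin t := one_sub_mul_sin_pos hb t
  have hD : 0 < 1 + r - b * sin t := by linarith
  have hw : HasDerivAt (fun t => b * cos t / (1 + r - b * sin t))
      ((-(b * sin t) * (1 + r - b * sin t) - b * cos t * (-(b * cos t))) /
        (1 + r - b * sin t) ^ 2) t :=
    ((hasDerivAt_cos t).const_mul b |>.congr_deriv (by ring)).div
      (((hasDerivAt_sin t).const_mul b).const_sub (1 + r) |>.congr_deriv (by ring)) hD.ne'
  refine (((hasDerivAt_id t).sub (hw.arctan.const_mul 2)).div_const r).congr_deriv ?_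
  have hpyth := sin_sq_add_cos_sq t
  field_simp
  linear_combination -(1 + r - b * sin t) * (b ^ 2 * hpyth + hr2)

lemma sinDenomIntegral_one {b : ℝ} (hb : |b| < 1) :
    sinDenomIntegral b 1 = 2 * π / √(1 - b ^ 2) := by
  have hb2 : 0 < 1 - b ^ 2 := one_sub_sq_pos_of_abs_lt_one hb
  have hcont := continuous_one_div_one_sub_mul_sin_pow hb 1
  simp only [sinDenomIntegral, pow_one] at hcont ⊢
  rw [integral_eq_sub_of_hasDerivAt
    (fun t _ => hasDerivAt_antideriv_one_div_one_sub_mul_sin hb (sqrt_pos.2 hb2)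
      (sq_sqrt hb2.le) t) (hcont.intervalIntegrable _ _)]
  simp only [sin_two_pi, cos_two_pi, sin_zero, cos_zero]
  ring

lemma hasDerivAt_cos_div_one_sub_mul_sin_pow {b : ℝ} (hb : |b| < 1) (n : ℕ) (t : ℝ) :
    HasDerivAt (fun t => b * cos t / (1 - b * sin t) ^ (n + 1))
      ((2 * n + 1) * (1 / (1 - b * sin t) ^ (n + 1)) - n * (1 / (1 - b * sin t) ^ n)
        - (n + 1) * (1 - b ^ 2) * (1 / (1 - b * sin t) ^ (n + 2))) t := by
  have hu := one_sub_mul_sin_pos hb t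
  have hpow : HasDerivAt (fun t => (1 - b * sin t) ^ (n + 1))
      ((n + 1 : ℕ) * (1 - b * sin t) ^ n * -(b * cos t)) t :=
    ((hasDerivAt_sin t).const_mul b).const_sub 1 |>.pow (n + 1)
  refine ((hasDerivAt_cos t).const_mul b |>.div hpow (pow_pos hu _).ne').congr_deriv ?_
  have hpyth := sin_sq_add_cos_sq t
  field_simp
  push_cast
  linear_combination (n + 1) * b ^ 2 * (1 - b * sin t) ^ (3 * n + 2) * hpyth

lemma sinDenomIntegral_recurrence {b : ℝ} (hb : |b| < 1) (n : ℕ) :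
    (n + 1) * (1 - b ^ 2) * sinDenomIntegral b (n + 2) =
      (2 * n + 1) * sinDenomIntegral b (n + 1) - n * sinDenomIntegral b n := by
  have hint (k : ℕ) (c : ℝ) : IntervalIntegrable (fun t => c * (1 / (1 - b * sin t) ^ k))
      MeasureTheory.volume 0 (2 * π) :=
    (continuous_const.mul (continuous_one_div_one_sub_mul_sin_pow hb k)).intervalIntegrable _ _
  have h := integral_eq_sub_of_hasDerivAt
    (fun t _ => hasDerivAt_cos_div_one_sub_mul_sin_pow hb n t)
    (((hint _ _).sub (hint _ _)).sub (hint _ _))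
  rw [integral_sub ((hint _ _).sub (hint _ _)) (hint _ _),
    integral_sub (hint _ _) (hint _ _)] at h
  simp only [integral_const_mul, sin_two_pi, cos_two_pi, sin_zero, cos_zero, sub_self] at h
  simp only [sinDenomIntegral]
  linarith

noncomputable def sinDenomPoly : ℕ → ℝ[X]
  | 0 => C (2 * π)
  | 1 => C (2 * π)
  | n + 2 => C ((2 * n + 3 : ℝ) / (n + 2)) * sinDenomPoly (n + 1)
      - C ((n + 1 : ℝ) / (n + 2)) * X * sinDenomPoly n

lemma natDegree_sinDenomPoly_le : ∀ n, (sinDenomPoly n).natDegree ≤ n / 2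
  | 0 | 1 => (natDegree_C _).trans_le (Nat.zero_le _)
  | n + 2 => by
    have h1 := natDegree_sinDenomPoly_le (n + 1)
    have h0 := natDegree_sinDenomPoly_le n
    rw [sinDenomPoly]
    refine (natDegree_sub_le _ _).trans (max_le ?_ ?_)
    · exact (natDegree_C_mul_le _ _).trans (by omega)
    · exact natDegree_mul_le.trans (by grw [natDegree_C_mul_le, natDegree_X_le]; omega)

lemma sinDenomPoly_eval_zero_pos : ∀ n, 0 < (sinDenomPoly n).eval 0
  | 0 | 1 => by simp [sinDenomPoly, pi_pos]
  | n + 2 => by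
    have := sinDenomPoly_eval_zero_pos (n + 1)
    simp only [sinDenomPoly, eval_sub, eval_mul, eval_C, eval_X, mul_zero, zero_mul, sub_zero]
    positivity

lemma sinDenomIntegral_succ_mul_sqrt_pow {b : ℝ} (hb : |b| < 1) (n : ℕ) :
    sinDenomIntegral b (n + 1) * √(1 - b ^ 2) ^ (2 * n + 1) =
      (sinDenomPoly n).eval (1 - b ^ 2) := by
  have hb2 : 0 < 1 - b ^ 2 := one_sub_sq_pos_of_abs_lt_one hb
  have hJ1 := sinDenomIntegral_one hb
  set r := √(1 - b ^ 2)
  have hr : 0 < r := sqrt_pos.2 hb2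
  have hr2 : r ^ 2 = 1 - b ^ 2 := sq_sqrt hb2.le
  induction n using Nat.twoStepInduction with
  | zero => simp [hJ1, sinDenomPoly, hr.ne']
  | one =>
    have hrec := sinDenomIntegral_recurrence hb 0
    simp only [hJ1, sinDenomPoly, eval_C] at hrec ⊢
    rw [← hr2] at hrec
    field_simp at hrec ⊢
    linear_combination hrec
  | more n ih0 ih1 =>
    have hrec := sinDenomIntegral_recurrence hb (n + 1)
    simp only [sinDenomPoly, eval_sub, eval_mul, eval_C, eval_X, ← ih0, ← ih1]
    rw [← hr2] at hrec ⊢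
    push_cast at hrec
    field_simp
    linear_combination r ^ (2 * n + 3) * hrec

/-- For `m = 0` both sides equal `2π`, since `0 - 1 = 0` in `ℕ`. -/
lemma sinDenomIntegral_eq_eval_div {b : ℝ} (hb : |b| < 1) (m : ℕ) :
    sinDenomIntegral b m =
      (sinDenomPoly (m - 1)).eval (1 - b ^ 2) / √(1 - b ^ 2) ^ (2 * m - 1) := by
  rcases m with _ | n
  · simp [sinDenomIntegral_zero, sinDenomPoly]
  · have hr : 0 < √(1 - b ^ 2) := sqrt_pos.2 (one_sub_sq_pos_of_abs_lt_one hb)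
    rw [show 2 * (n + 1) - 1 = 2 * n + 1 by omega, Nat.add_sub_cancel,
      ← sinDenomIntegral_succ_mul_sqrt_pow hb n, mul_div_cancel_right₀ _ (pow_pos hr _).ne']

theorem stmt_4_general (α : ℝ) (m : ℕ) :
    ∃ C : ℕ → ℝ, C 0 ≠ 0 ∧
      ∀ h : ℝ, 0 < h → h < 1 / α ^ 2 →
        ∫ t in (0 : ℝ)..(2 * π), 1 / (1 - α * (Real.sqrt h * Real.sin t)) ^ m =
          (1 / Real.sqrt (1 - α ^ 2 * h) ^ (2 * m - 1)) *
            ∑ j ∈ Finset.range ((m - 1) / 2 + 1),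
              C j * Real.sqrt (1 - α ^ 2 * h) ^ (2 * j) := by
  refine ⟨(sinDenomPoly (m - 1)).coeff, ?_, fun h h0 hh => ?_⟩
  · exact coeff_zero_eq_eval_zero (sinDenomPoly _) ▸ (sinDenomPoly_eval_zero_pos _).ne'
  have hαh : α ^ 2 * h = (α * √h) ^ 2 := by rw [mul_pow, sq_sqrt h0.le]
  have hb : |α * √h| < 1 := by
    rw [← sq_lt_one_iff_abs_lt_one, ← hαh]
    rcases eq_or_ne α 0 with rfl | hα
    · simp
    · exact (lt_div_iff₀' (by positivity)).1 hh
  simp_rw [← mul_assoc, hαh, pow_mul, sq_sqrt (one_sub_sq_pos_of_abs_lt_one hb).le]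
  rw [← eval_eq_sum_range' (Nat.lt_succ_of_le (natDegree_sinDenomPoly_le _)), one_div_mul_eq_div]
  exact sinDenomIntegral_eq_eval_div hb m

theorem stmt_4 (α : ℝ) (hα : α ≠ 0) (m : ℕ) (hm : 1 ≤ m) :
    ∃ C : ℕ → ℝ, C 0 ≠ 0 ∧
      ∀ h : ℝ, 0 < h → h < 1 / α ^ 2 →
        ∫ t in (0 : ℝ)..(2 * π), 1 / (1 - α * (Real.sqrt h * Real.sin t)) ^ m =
          (1 / Real.sqrt (1 - α ^ 2 * h) ^ (2 * m - 1)) *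
            ∑ j ∈ Finset.range ((m - 1) / 2 + 1),
              C j * Real.sqrt (1 - α ^ 2 * h) ^ (2 * j) :=
  stmt_4_general α m
end

section
/- Any zero h ∈ (0, H₀) of the function Φ(h) = (1-α₁²h)^{-(2m₁-1)/2} P(h) + (1-α₂²h)^{-(2m₂-1)/2} Q(h) + R(h), where P, Q, R are real polynomials, is a root of a nonzero real polynomial of degree at most 2·deg P + 2·deg Q + 2(m₁+m₂) + 2·deg R + 3, provided Φ is not identically zero. -/
/-!
By Rolle's theorem, a function on an interval has at most one zero more than its derivative,
unless the derivative vanishes identically (then the function is constant). Differentiating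
`Φ = P·(1 - c₁t)^x + Q·(1 - c₂t)^y + R` exactly `deg R + 1` times kills `R` and keeps the shape
`A·(1 - c₁t)^(x-k) + B·(1 - c₂t)^(y-k)` with `deg A ≤ deg P`, `deg B ≤ deg Q`. Dividing by the
positive factor `(1 - c₁t)^(x-k)` and differentiating `deg A + 1` more times kills `A` and leaves a
polynomial of degree at most `deg B + deg A + 1` times a positive weight. Hence a `Φ` that does not
vanish identically has at most `deg Q + 2 deg P + deg R + 3` zeros in `(0, H₀)`, and the polynomial
with exactly these roots is the required one.
-/

open Polynomial Set

def AtMostZeros (s : Set ℝ) (f : ℝ → ℝ) (n : ℕ∞) : Prop :=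
  (∃ x ∈ s, f x ≠ 0) → {x ∈ s | f x = 0}.encard ≤ n

theorem encard_zeros_le_encard_zeros_deriv_add_one {s : Set ℝ} (hs : s.OrdConnected)
    {f f' : ℝ → ℝ} (hf : ∀ x ∈ s, HasDerivAt f (f' x) x) :
    {x ∈ s | f x = 0}.encard ≤ {x ∈ s | f' x = 0}.encard + 1 := by
  obtain hinf | hfin := {x ∈ s | f' x = 0}.finite_or_infinite.symm
  · simp [hinf.encard_eq]
  rw [hfin.encard_eq_coe_toFinset_card]
  by_contra! hlt
  obtain ⟨u, hu, hucard⟩ := exists_subset_encard_eq (Order.add_one_le_of_lt hlt)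
  have hufin : u.Finite :=
    finite_of_encard_eq_coe (k := hfin.toFinset.card + 2) (by rw [hucard]; norm_cast)
  have key : hufin.toFinset.card ≤ hfin.toFinset.card + 1 := by
    refine Finset.card_le_of_interleaved fun x hx y hy hxy _ => ?_
    rw [Finite.mem_toFinset] at hx hy
    have hIcc : Icc x y ⊆ s := hs.out (hu hx).1 (hu hy).1
    obtain ⟨z, hz, hz'⟩ := exists_hasDerivAt_eq_zero hxy
      (fun t ht => (hf t (hIcc ht)).continuousAt.continuousWithinAt)
      ((hu hx).2.trans (hu hy).2.symm) fun t ht => hf t (hIcc (Ioo_subset_Icc_self ht))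
    exact ⟨z, by simpa using ⟨hIcc (Ioo_subset_Icc_self hz), hz'⟩, hz⟩
  rw [hufin.encard_eq_coe_toFinset_card] at hucard
  norm_cast at hucard
  omega

theorem AtMostZeros.of_hasDerivAt {s : Set ℝ} (hs : s.OrdConnected) {f f' : ℝ → ℝ}
    (hf : ∀ x ∈ s, HasDerivAt f (f' x) x) {n : ℕ∞} (h : AtMostZeros s f' n) :
    AtMostZeros s f (n + 1) := by
  rintro ⟨x₀, hx₀, hfx₀⟩
  by_cases hf' : ∃ x ∈ s, f' x ≠ 0
  · exact (encard_zeros_le_encard_zeros_deriv_add_one hs hf).trans (by gcongr; exact h hf')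
  push Not at hf'
  suffices {x ∈ s | f x = 0} = ∅ by simp [this]
  refine eq_empty_of_forall_notMem fun x ⟨hx, hfx⟩ => hfx₀ ?_
  have := hs.convex.norm_image_sub_le_of_norm_hasDerivWithin_le
    (fun t ht => (hf t ht).hasDerivWithinAt) (C := 0) (fun t ht => by simp [hf' t ht]) hx hx₀
  simpa [hfx, sub_eq_zero] using this

theorem AtMostZeros.of_hasDerivAt_iterate {s : Set ℝ} (hs : s.OrdConnected) {F : ℕ → ℝ → ℝ}
    {k : ℕ} (hF : ∀ j < k, ∀ x ∈ s, HasDerivAt (F j) (F (j + 1) x) x) {n : ℕ∞}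
    (h : AtMostZeros s (F k) n) : AtMostZeros s (F 0) (n + k) := by
  induction k generalizing n with
  | zero => simpa using h
  | succ k ih =>
    have := ih (fun j hj => hF j (by omega)) (h.of_hasDerivAt hs (hF k k.lt_succ_self))
    rwa [Nat.cast_succ, add_comm (k : ℕ∞), ← add_assoc]

theorem AtMostZeros.of_eq_zero_iff {s : Set ℝ} {f g : ℝ → ℝ} {n : ℕ∞} (h : AtMostZeros s f n)
    (hfg : ∀ x ∈ s, f x = 0 ↔ g x = 0) : AtMostZeros s g n := by
  rintro ⟨x, hx, hgx⟩
  have hzeros : {x ∈ s | g x = 0} = {x ∈ s | f x = 0} :=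
    Set.ext fun t => and_congr_right fun ht => (hfg t ht).symm
  exact hzeros ▸ h ⟨x, hx, mt (hfg x hx).1 hgx⟩

theorem AtMostZeros.mono {s : Set ℝ} {f : ℝ → ℝ} {m n : ℕ∞} (h : AtMostZeros s f m)
    (hmn : m ≤ n) : AtMostZeros s f n :=
  fun hf => (h hf).trans hmn

theorem atMostZeros_eval (p : ℝ[X]) (s : Set ℝ) : AtMostZeros s p.eval p.natDegree := by
  rintro ⟨x, -, hx⟩
  have hp : p ≠ 0 := by rintro rfl; simp at hx
  calc {x ∈ s | p.eval x = 0}.encard ≤ (p.roots.toFinset : Set ℝ).encard :=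
        encard_le_encard fun x hx => by simpa [hp] using hx.2
    _ ≤ p.natDegree := by
        rw [encard_coe_eq_coe_finsetCard]
        exact_mod_cast (Multiset.toFinset_card_le _).trans (card_roots' p)

theorem exists_ne_zero_natDegree_le_eval_eq_zero {Z : Set ℝ} {n : ℕ} (hZ : Z.encard ≤ n) :
    ∃ S : ℝ[X], S ≠ 0 ∧ S.natDegree ≤ n ∧ ∀ z ∈ Z, S.eval z = 0 := by
  obtain ⟨hfin, hcard⟩ := encard_le_coe_iff_finite_ncard_le.1 hZ
  refine ⟨Lagrange.nodal hfin.toFinset id, Lagrange.nodal_ne_zero, ?_, fun z hz => ?_⟩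
  · rwa [Lagrange.natDegree_nodal, ← ncard_eq_toFinset_card _ hfin]
  · exact Lagrange.eval_nodal_at_node (v := id) (hfin.mem_toFinset.2 hz)

theorem one_sub_mul_pos_of_lt_one_div {c t : ℝ} (hc : 0 ≤ c) (ht : t < 1 / c) : 0 < 1 - c * t := by
  rcases hc.eq_or_lt with rfl | hc
  · simp
  rw [lt_div_iff₀ hc] at ht
  linarith

theorem rpow_eq_rpow_sub_one_mul {b : ℝ} (hb : b ≠ 0) (e : ℝ) : b ^ e = b ^ (e - 1) * b := by
  rw [← Real.rpow_add_one hb, sub_add_cancel]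

theorem div_sqrt_pow_eq_mul_rpow (p : ℝ) {b : ℝ} (hb : 0 ≤ b) (n : ℕ) :
    p / √b ^ n = p * b ^ (-(n / 2 : ℝ)) := by
  rw [Real.sqrt_eq_rpow, ← Real.rpow_natCast, ← Real.rpow_mul hb, Real.rpow_neg hb, div_eq_mul_inv]
  ring_nf

theorem hasDerivAt_rpow_one_sub_mul (c e : ℝ) {x : ℝ} (hx : 0 < 1 - c * x) :
    HasDerivAt (fun t => (1 - c * t) ^ e) (-(e * c) * (1 - c * x) ^ (e - 1)) x := by
  refine (((hasDerivAt_id' x).const_mul c).const_sub 1 |>.rpow_const (Or.inl hx.ne')).congr_deriv ?_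
  ring

noncomputable def weightDeriv (c e : ℝ) (p : ℝ[X]) : ℝ[X] :=
  derivative p * (1 - C c * X) - C (e * c) * p

theorem natDegree_weightDeriv_le (c e : ℝ) (p : ℝ[X]) :
    (weightDeriv c e p).natDegree ≤ p.natDegree := by
  refine (natDegree_sub_le _ _).trans (max_le ?_ (natDegree_C_mul_le _ _))
  rcases p.natDegree.eq_zero_or_pos with hp | hp
  · simp [derivative_of_natDegree_zero hp]
  have hlin : (1 - C c * X : ℝ[X]).natDegree ≤ 1 := by compute_degree
  exact (natDegree_mul_le_of_le (natDegree_derivative_le p) hlin).trans (by omega)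

theorem hasDerivAt_eval_mul_rpow (p : ℝ[X]) {c e x : ℝ} (hx : 0 < 1 - c * x) :
    HasDerivAt (fun t => p.eval t * (1 - c * t) ^ e)
      ((weightDeriv c e p).eval x * (1 - c * x) ^ (e - 1)) x := by
  refine ((p.hasDerivAt x).mul (hasDerivAt_rpow_one_sub_mul c e hx)).congr_deriv ?_
  rw [rpow_eq_rpow_sub_one_mul hx.ne' e]
  simp only [weightDeriv, eval_sub, eval_mul, eval_one, eval_C, eval_X]
  ring

noncomputable def weightDeriv₂ (a x b y : ℝ) (p : ℝ[X]) : ℝ[X] :=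
  weightDeriv a x p * (1 - C b * X) - C (y * b) * (1 - C a * X) * p

theorem natDegree_weightDeriv₂_le (a x b y : ℝ) (p : ℝ[X]) :
    (weightDeriv₂ a x b y p).natDegree ≤ p.natDegree + 1 := by
  have hlin : ∀ c : ℝ, (1 - C c * X : ℝ[X]).natDegree ≤ 1 := fun c => by compute_degree
  refine (natDegree_sub_le _ _).trans (max_le ?_ ?_)
  · exact natDegree_mul_le_of_le (natDegree_weightDeriv_le a x p) (hlin b)
  · rw [add_comm]
    exact natDegree_mul_le_of_le ((natDegree_C_mul_le _ _).trans (hlin a)) le_rfl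

theorem hasDerivAt_eval_mul_rpow_mul_rpow (p : ℝ[X]) {a b x y t : ℝ} (ha : 0 < 1 - a * t)
    (hb : 0 < 1 - b * t) :
    HasDerivAt (fun t => p.eval t * (1 - a * t) ^ x * (1 - b * t) ^ y)
      ((weightDeriv₂ a x b y p).eval t * (1 - a * t) ^ (x - 1) * (1 - b * t) ^ (y - 1)) t := by
  refine ((hasDerivAt_eval_mul_rpow p ha).mul (hasDerivAt_rpow_one_sub_mul b y hb)).congr_deriv ?_
  rw [rpow_eq_rpow_sub_one_mul ha.ne' x, rpow_eq_rpow_sub_one_mul hb.ne' y]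
  simp only [weightDeriv₂, eval_sub, eval_mul, eval_one, eval_C, eval_X]
  ring

noncomputable def weightDerivIter (c e : ℝ) (p : ℝ[X]) : ℕ → ℝ[X]
  | 0 => p
  | j + 1 => weightDeriv c (e - j) (weightDerivIter c e p j)

theorem natDegree_weightDerivIter_le (c e : ℝ) (p : ℝ[X]) (j : ℕ) :
    (weightDerivIter c e p j).natDegree ≤ p.natDegree := by
  induction j with
  | zero => rfl
  | succ j ih => exact (natDegree_weightDeriv_le _ _ _).trans ih

theorem hasDerivAt_weightDerivIter (p : ℝ[X]) (j : ℕ) {c e t : ℝ} (ht : 0 < 1 - c * t) :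
    HasDerivAt (fun t => (weightDerivIter c e p j).eval t * (1 - c * t) ^ (e - j))
      ((weightDerivIter c e p (j + 1)).eval t * (1 - c * t) ^ (e - ↑(j + 1))) t := by
  rw [Nat.cast_succ, ← sub_sub]
  exact hasDerivAt_eval_mul_rpow _ ht

noncomputable def weightDeriv₂Iter (a x b y : ℝ) (p : ℝ[X]) : ℕ → ℝ[X]
  | 0 => p
  | j + 1 => weightDeriv₂ a (x - j) b (y - j) (weightDeriv₂Iter a x b y p j)

theorem natDegree_weightDeriv₂Iter_le (a x b y : ℝ) (p : ℝ[X]) (j : ℕ) :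
    (weightDeriv₂Iter a x b y p j).natDegree ≤ p.natDegree + j := by
  induction j with
  | zero => rfl
  | succ j ih => exact (natDegree_weightDeriv₂_le _ _ _ _ _).trans (by omega)

theorem hasDerivAt_weightDeriv₂Iter (p : ℝ[X]) (j : ℕ) {a x b y t : ℝ} (ha : 0 < 1 - a * t)
    (hb : 0 < 1 - b * t) :
    HasDerivAt (fun t => (weightDeriv₂Iter a x b y p j).eval t * (1 - a * t) ^ (x - j) *
        (1 - b * t) ^ (y - j))
      ((weightDeriv₂Iter a x b y p (j + 1)).eval t * (1 - a * t) ^ (x - ↑(j + 1)) *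
        (1 - b * t) ^ (y - ↑(j + 1))) t := by
  rw [Nat.cast_succ, ← sub_sub, ← sub_sub]
  exact hasDerivAt_eval_mul_rpow_mul_rpow _ ha hb

theorem atMostZeros_eval_add_eval_mul_rpow_mul_rpow {s : Set ℝ} (hs : s.OrdConnected) {a b : ℝ}
    (ha : ∀ t ∈ s, 0 < 1 - a * t) (hb : ∀ t ∈ s, 0 < 1 - b * t) (U V : ℝ[X]) (x y : ℝ) :
    AtMostZeros s (fun t => U.eval t + V.eval t * (1 - a * t) ^ x * (1 - b * t) ^ y)
      (V.natDegree + 2 * (U.natDegree + 1)) := by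
  set k := U.natDegree + 1
  let F : ℕ → ℝ → ℝ := fun j t => (derivative^[j] U).eval t +
    (weightDeriv₂Iter a x b y V j).eval t * (1 - a * t) ^ (x - j) * (1 - b * t) ^ (y - j)
  have hF : ∀ j < k, ∀ t ∈ s, HasDerivAt (F j) (F (j + 1) t) t := fun j _ t ht => by
    simpa only [F, Function.iterate_succ_apply'] using
      ((derivative^[j] U).hasDerivAt t).fun_add
        (hasDerivAt_weightDeriv₂Iter V j (ha t ht) (hb t ht))
  have hFk : AtMostZeros s (F k) (V.natDegree + k) := by
    refine ((atMostZeros_eval (weightDeriv₂Iter a x b y V k) s).of_eq_zero_iff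
      fun t ht => ?_).mono (mod_cast natDegree_weightDeriv₂Iter_le a x b y V k)
    have hw := (Real.rpow_pos_of_pos (ha t ht) (x - k)).ne'
    have hw' := (Real.rpow_pos_of_pos (hb t ht) (y - k)).ne'
    have hUk : derivative^[k] U = 0 := iterate_derivative_eq_zero (Nat.lt_succ_self _)
    simp only [F, hUk, eval_zero, zero_add, mul_eq_zero, hw, hw', or_false]
  have h0 := hFk.of_hasDerivAt_iterate hs hF
  simp only [F, Function.iterate_zero_apply, Nat.cast_zero, sub_zero] at h0
  exact h0.mono (le_of_eq (by push_cast [k]; ring))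

theorem atMostZeros_eval_mul_rpow_add_eval_mul_rpow {s : Set ℝ} (hs : s.OrdConnected) {a b : ℝ}
    (ha : ∀ t ∈ s, 0 < 1 - a * t) (hb : ∀ t ∈ s, 0 < 1 - b * t) (A B : ℝ[X]) (x y : ℝ) :
    AtMostZeros s (fun t => A.eval t * (1 - a * t) ^ x + B.eval t * (1 - b * t) ^ y)
      (B.natDegree + 2 * (A.natDegree + 1)) := by
  refine (atMostZeros_eval_add_eval_mul_rpow_mul_rpow hs ha hb A B (-x) y).of_eq_zero_iff
    fun t ht => ?_
  have hw := Real.rpow_pos_of_pos (ha t ht) x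
  have hfactor : A.eval t * (1 - a * t) ^ x + B.eval t * (1 - b * t) ^ y =
      (1 - a * t) ^ x * (A.eval t + B.eval t * (1 - a * t) ^ (-x) * (1 - b * t) ^ y) := by
    rw [Real.rpow_neg (ha t ht).le]
    field_simp
  rw [hfactor, mul_eq_zero, or_iff_right hw.ne']

theorem atMostZeros_eval_mul_rpow_add_eval_mul_rpow_add_eval {s : Set ℝ} (hs : s.OrdConnected)
    {a b : ℝ} (ha : ∀ t ∈ s, 0 < 1 - a * t) (hb : ∀ t ∈ s, 0 < 1 - b * t) (A B R : ℝ[X])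
    (x y : ℝ) :
    AtMostZeros s (fun t => A.eval t * (1 - a * t) ^ x + B.eval t * (1 - b * t) ^ y + R.eval t)
      (B.natDegree + 2 * (A.natDegree + 1) + (R.natDegree + 1)) := by
  set k := R.natDegree + 1
  let F : ℕ → ℝ → ℝ := fun j t => (weightDerivIter a x A j).eval t * (1 - a * t) ^ (x - j) +
    (weightDerivIter b y B j).eval t * (1 - b * t) ^ (y - j) + (derivative^[j] R).eval t
  have hF : ∀ j < k, ∀ t ∈ s, HasDerivAt (F j) (F (j + 1) t) t := fun j _ t ht => by
    simpa only [F, Function.iterate_succ_apply'] using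
      ((hasDerivAt_weightDerivIter A j (ha t ht)).fun_add
        (hasDerivAt_weightDerivIter B j (hb t ht))).fun_add ((derivative^[j] R).hasDerivAt t)
  have hFk : AtMostZeros s (F k) (B.natDegree + 2 * (A.natDegree + 1)) := by
    have hRk : derivative^[k] R = 0 := iterate_derivative_eq_zero (Nat.lt_succ_self _)
    refine ((atMostZeros_eval_mul_rpow_add_eval_mul_rpow hs ha hb
      (weightDerivIter a x A k) (weightDerivIter b y B k) (x - k) (y - k)).of_eq_zero_iff
      fun t _ => by simp only [F, hRk, eval_zero, add_zero]).mono ?_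
    have hA := natDegree_weightDerivIter_le a x A k
    have hB := natDegree_weightDerivIter_le b y B k
    gcongr
  have h0 := hFk.of_hasDerivAt_iterate hs hF
  simpa only [F, k, weightDerivIter, Function.iterate_zero_apply, Nat.cast_zero, sub_zero,
    Nat.cast_add, Nat.cast_one] using h0

theorem stmt_9_general (α₁ α₂ : ℝ) (m₁ m₂ : ℕ)
    (P Q R : Polynomial ℝ) (Φ : ℝ → ℝ)
    (hΦ : ∀ h ∈ Set.Ioo (0 : ℝ) (min (1 / α₁ ^ 2) (1 / α₂ ^ 2)),
      Φ h = P.eval h / Real.sqrt (1 - α₁ ^ 2 * h) ^ (2 * m₁ - 1)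
          + Q.eval h / Real.sqrt (1 - α₂ ^ 2 * h) ^ (2 * m₂ - 1) + R.eval h)
    (hne0 : ∃ h ∈ Set.Ioo (0 : ℝ) (min (1 / α₁ ^ 2) (1 / α₂ ^ 2)), Φ h ≠ 0) :
    ∃ S : Polynomial ℝ, S ≠ 0 ∧
      S.natDegree ≤ 2 * P.natDegree + 2 * Q.natDegree + 2 * (m₁ + m₂) + 2 * R.natDegree + 3 ∧
      ∀ h ∈ Set.Ioo (0 : ℝ) (min (1 / α₁ ^ 2) (1 / α₂ ^ 2)), Φ h = 0 → S.eval h = 0 := by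
  set s := Ioo (0 : ℝ) (min (1 / α₁ ^ 2) (1 / α₂ ^ 2))
  have hpos₁ : ∀ t ∈ s, 0 < 1 - α₁ ^ 2 * t := fun t ht =>
    one_sub_mul_pos_of_lt_one_div (sq_nonneg α₁) (ht.2.trans_le (min_le_left _ _))
  have hpos₂ : ∀ t ∈ s, 0 < 1 - α₂ ^ 2 * t := fun t ht =>
    one_sub_mul_pos_of_lt_one_div (sq_nonneg α₂) (ht.2.trans_le (min_le_right _ _))
  have hzeros := (atMostZeros_eval_mul_rpow_add_eval_mul_rpow_add_eval ordConnected_Ioo hpos₁ hpos₂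
    P Q R _ _).of_eq_zero_iff (g := Φ) fun t ht => by
      rw [hΦ t ht, div_sqrt_pow_eq_mul_rpow _ (hpos₁ t ht).le,
        div_sqrt_pow_eq_mul_rpow _ (hpos₂ t ht).le]
  obtain ⟨S, hS, hSdeg, hSzero⟩ := exists_ne_zero_natDegree_le_eval_eq_zero
    (n := Q.natDegree + 2 * (P.natDegree + 1) + (R.natDegree + 1)) (mod_cast hzeros hne0)
  exact ⟨S, hS, by omega, fun t ht hΦt => hSzero t ⟨ht, hΦt⟩⟩

theorem stmt_9 (α₁ α₂ : ℝ) (hα₁ : α₁ ≠ 0) (hα₂ : α₂ ≠ 0) (hne : α₁ ≠ α₂)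
    (m₁ m₂ : ℕ) (hm₁ : 1 ≤ m₁) (hm₂ : 1 ≤ m₂)
    (P Q R : Polynomial ℝ) (Φ : ℝ → ℝ)
    (hΦ : ∀ h ∈ Set.Ioo (0 : ℝ) (min (1 / α₁ ^ 2) (1 / α₂ ^ 2)),
      Φ h = P.eval h / Real.sqrt (1 - α₁ ^ 2 * h) ^ (2 * m₁ - 1)
          + Q.eval h / Real.sqrt (1 - α₂ ^ 2 * h) ^ (2 * m₂ - 1) + R.eval h)
    (hne0 : ∃ h ∈ Set.Ioo (0 : ℝ) (min (1 / α₁ ^ 2) (1 / α₂ ^ 2)), Φ h ≠ 0) :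
    ∃ S : Polynomial ℝ, S ≠ 0 ∧
      S.natDegree ≤ 2 * P.natDegree + 2 * Q.natDegree + 2 * (m₁ + m₂) + 2 * R.natDegree + 3 ∧
      ∀ h ∈ Set.Ioo (0 : ℝ) (min (1 / α₁ ^ 2) (1 / α₂ ^ 2)), Φ h = 0 → S.eval h = 0 :=
  stmt_9_general α₁ α₂ m₁ m₂ P Q R Φ hΦ hne0
end

section
/- Let α₁ ≠ α₂ be nonzero reals and s, m₁, m₂ positive integers. Suppose F : (0, H₀) → ℝ has the form F(h) = r₁^{-(2m₁-1)} P(h) + r₂^{-(2m₂-1)} Q(h) + R(h), with r_i = √(1-α_i²h), H₀ = min(1/α₁², 1/α₂²), P of degree ≤ m₁−1+s, Q of degree ≤ m₂−1+s, R of degree ≤ ⌊(2s+1−m₁−m₂)/2⌋, and F not identically zero. Then F has at most 4s + 4(m₁+m₂) − 6 zeros in (0, H₀), counted without multiplicity. -/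
/-!
Write `r₁, r₂` for the two radicals. At a zero of `F`, multiplying by
`r₁^(2m₁-1) r₂^(2m₂-1)` gives `p r₂ + q r₁ + r r₁ r₂ = 0` with polynomials `p, q` of degree
at most `N = s + m₁ + m₂ - 2` and `r` of degree `< N`. Squaring twice removes the radicals and
leaves a polynomial equation of degree at most `4N + 2`. That polynomial is not identically zero:
`1 - α₁² h` has a simple root while squares have roots of even multiplicity, so it can only vanish
when `p = q = r = 0`, i.e. when `F` vanishes identically. If `α₁² = α₂²` the two radicals
coincide and a single squaring suffices.
-/

open Polynomial

namespace Polynomial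

variable {R : Type*} [CommRing R]

theorem eq_zero_of_sq_eq_sq_mul_of_odd_rootMultiplicity [IsDomain R] {v w y : R[X]} {t : R}
    (hv : Odd (v.rootMultiplicity t)) (h : w ^ 2 = y ^ 2 * v) : w = 0 ∧ y = 0 := by
  have hv0 : v ≠ 0 := by rintro rfl; simp at hv
  by_cases hy : y = 0
  · subst hy
    simpa using h
  have hyv : y * y * v ≠ 0 := mul_ne_zero (mul_ne_zero hy hy) hv0
  have hw : w ≠ 0 := by
    rintro rfl
    exact hyv (by simpa [sq] using h.symm)
  have hmult := congrArg (rootMultiplicity t) h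
  rw [sq, sq, rootMultiplicity_mul (mul_ne_zero hw hw), rootMultiplicity_mul hyv,
    rootMultiplicity_mul (mul_ne_zero hy hy)] at hmult
  obtain ⟨k, hk⟩ := hv
  omega

theorem finite_and_ncard_le_natDegree_of_forall_isRoot [IsDomain R] {g : R[X]} (hg : g ≠ 0)
    {S : Set R} (hS : ∀ x ∈ S, g.IsRoot x) : S.Finite ∧ S.ncard ≤ g.natDegree := by
  have hsub : S ⊆ g.rootSet R := fun x hx => by
    rw [mem_rootSet_of_ne hg, coe_aeval_eq_eval]
    exact hS x hx
  exact ⟨(g.rootSet_finite R).subset hsub,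
    (Set.ncard_le_ncard hsub (g.rootSet_finite R)).trans (g.ncard_rootSet_le R)⟩

theorem natDegree_one_sub_C_mul_X_pow_le (a : R) (m : ℕ) : ((1 - C a * X) ^ m).natDegree ≤ m :=
  (natDegree_pow_le_of_le m (show (1 - C a * X).natDegree ≤ 1 by compute_degree)).trans_eq
    (mul_one m)

theorem rootMultiplicity_one_sub_C_mul_X {K : Type*} [Field K] {a : K} (ha : a ≠ 0) :
    (1 - C a * X).rootMultiplicity a⁻¹ = 1 := by
  have hfactor : (1 - C a * X : K[X]) = C (-a) * (X - C a⁻¹) := by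
    rw [mul_sub, ← C_mul, neg_mul, mul_inv_cancel₀ ha, C_neg, C_neg, C_1]
    ring
  rw [hfactor, rootMultiplicity_mul (mul_ne_zero (by simpa using ha) (X_sub_C_ne_zero _)),
    rootMultiplicity_C, rootMultiplicity_X_sub_C_self, zero_add]

/-- If `x₁ ^ 2 = u₁`, `x₂ ^ 2 = u₂` and `p x₂ + q x₁ + r x₁ x₂ = 0`, squaring
`p x₂ + q x₁ = - r x₁ x₂` leaves `W = 2 p q x₁ x₂` with `W = r² u₁ u₂ - p² u₂ - q² u₁`,
and squaring once more eliminates both radicals. -/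
noncomputable def twoRadicalResolvent (u₁ u₂ p q r : R[X]) : R[X] :=
  (r ^ 2 * (u₁ * u₂) - p ^ 2 * u₂ - q ^ 2 * u₁) ^ 2 - (2 * (p * q)) ^ 2 * (u₁ * u₂)

/-- Squares `(p + q) x = - r x ^ 2` with `x ^ 2 = u`, without dividing by `x`. -/
noncomputable def oneRadicalResolvent (u p q r : R[X]) : R[X] :=
  (p + q) ^ 2 * u - r ^ 2 * u ^ 2

theorem isRoot_twoRadicalResolvent {u₁ u₂ p q r : R[X]} {t x₁ x₂ : R}
    (h₁ : x₁ ^ 2 = u₁.eval t) (h₂ : x₂ ^ 2 = u₂.eval t)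
    (h : p.eval t * x₂ + q.eval t * x₁ + r.eval t * (x₁ * x₂) = 0) :
    (twoRadicalResolvent u₁ u₂ p q r).IsRoot t := by
  simp only [IsRoot, twoRadicalResolvent, eval_sub, eval_mul, eval_pow, eval_ofNat, ← h₁, ← h₂]
  linear_combination (r.eval t * (x₁ * x₂) - p.eval t * x₂ - q.eval t * x₁) *
    (r.eval t * (x₁ * x₂) - p.eval t * x₂ + q.eval t * x₁) *
    (r.eval t * (x₁ * x₂) + p.eval t * x₂ - q.eval t * x₁) * h

theorem isRoot_oneRadicalResolvent {u p q r : R[X]} {t x : R} (hx : x ^ 2 = u.eval t)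
    (h : p.eval t * x + q.eval t * x + r.eval t * (x * x) = 0) :
    (oneRadicalResolvent u p q r).IsRoot t := by
  simp only [IsRoot, oneRadicalResolvent, eval_sub, eval_mul, eval_pow, eval_add, ← hx]
  linear_combination ((p.eval t + q.eval t) * x - r.eval t * x ^ 2) * h

theorem natDegree_twoRadicalResolvent_le {u₁ u₂ p q r : R[X]} {N : ℕ}
    (hu₁ : u₁.natDegree ≤ 1) (hu₂ : u₂.natDegree ≤ 1) (hp : p.natDegree ≤ N)
    (hq : q.natDegree ≤ N) (hr : r.natDegree < N) :
    (twoRadicalResolvent u₁ u₂ p q r).natDegree ≤ 4 * N + 2 := by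
  have hu := natDegree_mul_le_of_le hu₁ hu₂
  have hW := natDegree_sub_le_of_le (natDegree_sub_le_of_le
    (natDegree_mul_le_of_le (natDegree_pow_le_of_le 2 (Nat.le_sub_one_of_lt hr)) hu)
    (natDegree_mul_le_of_le (natDegree_pow_le_of_le 2 hp) hu₂))
    (natDegree_mul_le_of_le (natDegree_pow_le_of_le 2 hq) hu₁)
  have hpq := natDegree_mul_le_of_le (natDegree_ofNat 2 (R := R)).le (natDegree_mul_le_of_le hp hq)
  refine (natDegree_sub_le_of_le (natDegree_pow_le_of_le 2 hW)
    (natDegree_mul_le_of_le (natDegree_pow_le_of_le 2 hpq) hu)).trans ?_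
  omega

theorem natDegree_oneRadicalResolvent_le {u p q r : R[X]} {N : ℕ} (hu : u.natDegree ≤ 1)
    (hp : p.natDegree ≤ N) (hq : q.natDegree ≤ N) (hr : r.natDegree < N) :
    (oneRadicalResolvent u p q r).natDegree ≤ 2 * N + 1 := by
  refine (natDegree_sub_le_of_le
    (natDegree_mul_le_of_le (natDegree_pow_le_of_le 2 (natDegree_add_le_of_degree_le hp hq)) hu)
    (natDegree_mul_le_of_le (natDegree_pow_le_of_le 2 (Nat.le_sub_one_of_lt hr))
      (natDegree_pow_le_of_le 2 hu))).trans ?_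
  omega

theorem eq_zero_of_twoRadicalResolvent_eq_zero [IsDomain R] [CharZero R] {u₁ u₂ p q r : R[X]}
    {t₁ t₂ : R} (hu₁ : Odd (u₁.rootMultiplicity t₁)) (hu₂ : Odd (u₂.rootMultiplicity t₂))
    (hu₂t₁ : ¬u₂.IsRoot t₁) (h : twoRadicalResolvent u₁ u₂ p q r = 0) :
    p = 0 ∧ q = 0 ∧ r = 0 := by
  have hu₁0 : u₁ ≠ 0 := by rintro rfl; simp at hu₁
  have hu₂0 : u₂ ≠ 0 := by rintro rfl; simp at hu₂
  have hodd : Odd ((u₁ * u₂).rootMultiplicity t₁) := by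
    rwa [rootMultiplicity_mul (mul_ne_zero hu₁0 hu₂0), rootMultiplicity_eq_zero hu₂t₁, add_zero]
  obtain ⟨hW, hpq⟩ := eq_zero_of_sq_eq_sq_mul_of_odd_rootMultiplicity hodd (sub_eq_zero.mp h)
  rcases mul_eq_zero.mp ((mul_eq_zero.mp hpq).resolve_left two_ne_zero) with rfl | rfl
  · have hq : q ^ 2 = r ^ 2 * u₂ := mul_left_cancel₀ hu₁0 (by linear_combination -hW)
    obtain ⟨rfl, rfl⟩ := eq_zero_of_sq_eq_sq_mul_of_odd_rootMultiplicity hu₂ hq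
    simp
  · have hp : p ^ 2 = r ^ 2 * u₁ := mul_left_cancel₀ hu₂0 (by linear_combination -hW)
    obtain ⟨rfl, rfl⟩ := eq_zero_of_sq_eq_sq_mul_of_odd_rootMultiplicity hu₁ hp
    simp

theorem eq_zero_of_oneRadicalResolvent_eq_zero [IsDomain R] {u p q r : R[X]} {t : R}
    (hu : Odd (u.rootMultiplicity t)) (h : oneRadicalResolvent u p q r = 0) :
    p + q = 0 ∧ r = 0 := by
  have hu0 : u ≠ 0 := by rintro rfl; simp at hu
  rw [oneRadicalResolvent] at h
  exact eq_zero_of_sq_eq_sq_mul_of_odd_rootMultiplicity hu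
    (mul_left_cancel₀ hu0 (by linear_combination h))

end Polynomial

noncomputable def radicalCombination (a₁ a₂ : ℝ) (p q r : ℝ[X]) (h : ℝ) : ℝ :=
  p.eval h * √(1 - a₂ * h) + q.eval h * √(1 - a₁ * h) +
    r.eval h * (√(1 - a₁ * h) * √(1 - a₂ * h))

theorem exists_natDegree_le_isRoot_of_radicalCombination_eq_zero {a₁ a₂ : ℝ} (ha₁ : a₁ ≠ 0)
    (ha₂ : a₂ ≠ 0) {p q r : ℝ[X]} {N : ℕ} (hp : p.natDegree ≤ N) (hq : q.natDegree ≤ N)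
    (hr : r.natDegree < N) :
    ∃ g : ℝ[X], g.natDegree ≤ 4 * N + 2 ∧
      (g = 0 → ∀ h, radicalCombination a₁ a₂ p q r h = 0) ∧
      ∀ h, 0 ≤ 1 - a₁ * h → 0 ≤ 1 - a₂ * h → radicalCombination a₁ a₂ p q r h = 0 →
        g.IsRoot h := by
  have hlin (a : ℝ) : (1 - C a * X).natDegree ≤ 1 := by compute_degree
  have hsqrt {a h : ℝ} (hv : 0 ≤ 1 - a * h) : √(1 - a * h) ^ 2 = (1 - C a * X).eval h := by
    simp [Real.sq_sqrt hv]
  have hodd {a : ℝ} (ha : a ≠ 0) : Odd ((1 - C a * X).rootMultiplicity a⁻¹) := by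
    rw [rootMultiplicity_one_sub_C_mul_X ha]
    exact odd_one
  by_cases ha : a₁ = a₂
  · subst ha
    refine ⟨oneRadicalResolvent (1 - C a₁ * X) p q r,
      (natDegree_oneRadicalResolvent_le (hlin a₁) hp hq hr).trans (by omega), fun hg h => ?_,
      fun h hv _ hzero => isRoot_oneRadicalResolvent (hsqrt hv) hzero⟩
    obtain ⟨hpq, rfl⟩ := eq_zero_of_oneRadicalResolvent_eq_zero (hodd ha₁) hg
    rw [radicalCombination, eval_zero, zero_mul, add_zero, ← add_mul, ← eval_add, hpq, eval_zero,
      zero_mul]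
  · refine ⟨twoRadicalResolvent (1 - C a₁ * X) (1 - C a₂ * X) p q r,
      natDegree_twoRadicalResolvent_le (hlin a₁) (hlin a₂) hp hq hr, fun hg h => ?_,
      fun h hv₁ hv₂ hzero => isRoot_twoRadicalResolvent (hsqrt hv₁) (hsqrt hv₂) hzero⟩
    have hroot : ¬(1 - C a₂ * X).IsRoot a₁⁻¹ := by
      rw [IsRoot, eval_sub, eval_one, eval_mul, eval_C, eval_X, sub_eq_zero, ← div_eq_mul_inv,
        eq_comm, div_eq_one_iff_eq ha₁]
      exact Ne.symm ha
    obtain ⟨rfl, rfl, rfl⟩ := eq_zero_of_twoRadicalResolvent_eq_zero (hodd ha₁) (hodd ha₂) hroot hg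
    simp [radicalCombination]

theorem Real.sqrt_pow_two_mul_sub_one {v : ℝ} (hv : 0 ≤ v) {m : ℕ} (hm : 1 ≤ m) :
    √v ^ (2 * m - 1) = v ^ (m - 1) * √v := by
  obtain ⟨k, rfl⟩ := Nat.exists_eq_add_of_le' hm
  rw [show 2 * (k + 1) - 1 = 2 * k + 1 by omega, pow_succ, pow_mul, Real.sq_sqrt hv,
    Nat.add_sub_cancel]

theorem radicalCombination_eq_zero_iff {a₁ a₂ h : ℝ} (hv₁ : 0 < 1 - a₁ * h)
    (hv₂ : 0 < 1 - a₂ * h) {m₁ m₂ : ℕ} (hm₁ : 1 ≤ m₁) (hm₂ : 1 ≤ m₂) (P Q R : ℝ[X]) :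
    radicalCombination a₁ a₂ (P * (1 - C a₂ * X) ^ (m₂ - 1)) (Q * (1 - C a₁ * X) ^ (m₁ - 1))
        (R * ((1 - C a₁ * X) ^ (m₁ - 1) * (1 - C a₂ * X) ^ (m₂ - 1))) h = 0 ↔
      P.eval h / √(1 - a₁ * h) ^ (2 * m₁ - 1) + Q.eval h / √(1 - a₂ * h) ^ (2 * m₂ - 1) +
        R.eval h = 0 := by
  have hx₁ := Real.sqrt_pos.2 hv₁
  have hx₂ := Real.sqrt_pos.2 hv₂
  rw [← mul_eq_zero_iff_right (mul_pos (pow_pos hx₁ (2 * m₁ - 1)) (pow_pos hx₂ (2 * m₂ - 1))).ne',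
    Real.sqrt_pow_two_mul_sub_one hv₁.le hm₁, Real.sqrt_pow_two_mul_sub_one hv₂.le hm₂]
  simp only [radicalCombination, eval_mul, eval_pow, eval_sub, eval_one, eval_C, eval_X]
  generalize √(1 - a₁ * h) = x₁ at hx₁ ⊢
  generalize √(1 - a₂ * h) = x₂ at hx₂ ⊢
  generalize 1 - a₁ * h = v₁ at hv₁ ⊢
  generalize 1 - a₂ * h = v₂ at hv₂ ⊢
  field_simp
  rw [mul_zero, mul_eq_zero_iff_left (by positivity)]

theorem stmt_17_general (α₁ α₂ : ℝ) (hα₁ : α₁ ≠ 0) (hα₂ : α₂ ≠ 0)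
    (s m₁ m₂ : ℕ) (hs : 1 ≤ s) (hm₁ : 1 ≤ m₁) (hm₂ : 1 ≤ m₂)
    (P Q R : Polynomial ℝ)
    (hP : P.natDegree ≤ m₁ - 1 + s) (hQ : Q.natDegree ≤ m₂ - 1 + s)
    (hR : R.natDegree ≤ (2 * s + 1 - m₁ - m₂) / 2)
    (F : ℝ → ℝ)
    (hF : ∀ h ∈ Set.Ioo (0 : ℝ) (min (1 / α₁ ^ 2) (1 / α₂ ^ 2)),
      F h = P.eval h / Real.sqrt (1 - α₁ ^ 2 * h) ^ (2 * m₁ - 1)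
          + Q.eval h / Real.sqrt (1 - α₂ ^ 2 * h) ^ (2 * m₂ - 1) + R.eval h)
    (hne0 : ∃ h ∈ Set.Ioo (0 : ℝ) (min (1 / α₁ ^ 2) (1 / α₂ ^ 2)), F h ≠ 0) :
    {h : ℝ | h ∈ Set.Ioo (0 : ℝ) (min (1 / α₁ ^ 2) (1 / α₂ ^ 2)) ∧ F h = 0}.Finite ∧
      {h : ℝ | h ∈ Set.Ioo (0 : ℝ) (min (1 / α₁ ^ 2) (1 / α₂ ^ 2)) ∧ F h = 0}.ncard ≤
        4 * s + 4 * (m₁ + m₂) - 6 := by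
  set I := Set.Ioo (0 : ℝ) (min (1 / α₁ ^ 2) (1 / α₂ ^ 2))
  have hv : ∀ h ∈ I, 0 < 1 - α₁ ^ 2 * h ∧ 0 < 1 - α₂ ^ 2 * h := by
    rintro h ⟨-, hlt⟩
    have h₁ := (lt_div_iff₀' (by positivity)).1 (lt_min_iff.1 hlt).1
    have h₂ := (lt_div_iff₀' (by positivity)).1 (lt_min_iff.1 hlt).2
    constructor <;> linarith
  have hu₁ := natDegree_one_sub_C_mul_X_pow_le (α₁ ^ 2) (m₁ - 1)
  have hu₂ := natDegree_one_sub_C_mul_X_pow_le (α₂ ^ 2) (m₂ - 1)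
  obtain ⟨g, hg_deg, hg_zero, hg_root⟩ :=
    exists_natDegree_le_isRoot_of_radicalCombination_eq_zero (pow_ne_zero 2 hα₁)
      (pow_ne_zero 2 hα₂) (N := m₁ - 1 + (m₂ - 1) + s)
      ((natDegree_mul_le_of_le hP hu₂).trans (by omega))
      ((natDegree_mul_le_of_le hQ hu₁).trans (by omega))
      ((natDegree_mul_le_of_le hR (natDegree_mul_le_of_le hu₁ hu₂)).trans_lt (by omega))
  have hzero : ∀ h ∈ I, radicalCombination (α₁ ^ 2) (α₂ ^ 2) _ _ _ h = 0 ↔ F h = 0 :=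
    fun h hh => (hF h hh).symm ▸
      radicalCombination_eq_zero_iff (hv h hh).1 (hv h hh).2 hm₁ hm₂ P Q R
  have hg : g ≠ 0 := by
    obtain ⟨h₀, hh₀, hF₀⟩ := hne0
    exact fun hg => hF₀ ((hzero h₀ hh₀).1 (hg_zero hg h₀))
  have hroots : ∀ h ∈ {h | h ∈ I ∧ F h = 0}, g.IsRoot h := fun h ⟨hh, hFh⟩ =>
    hg_root h (hv h hh).1.le (hv h hh).2.le ((hzero h hh).2 hFh)
  obtain ⟨hfinite, hcard⟩ := finite_and_ncard_le_natDegree_of_forall_isRoot hg hroots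
  exact ⟨hfinite, hcard.trans (by omega)⟩

theorem stmt_17 (α₁ α₂ : ℝ) (hα₁ : α₁ ≠ 0) (hα₂ : α₂ ≠ 0) (hne : α₁ ≠ α₂)
    (s m₁ m₂ : ℕ) (hs : 1 ≤ s) (hm₁ : 1 ≤ m₁) (hm₂ : 1 ≤ m₂)
    (P Q R : Polynomial ℝ)
    (hP : P.natDegree ≤ m₁ - 1 + s) (hQ : Q.natDegree ≤ m₂ - 1 + s)
    (hR : R.natDegree ≤ (2 * s + 1 - m₁ - m₂) / 2)
    (F : ℝ → ℝ)
    (hF : ∀ h ∈ Set.Ioo (0 : ℝ) (min (1 / α₁ ^ 2) (1 / α₂ ^ 2)),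
      F h = P.eval h / Real.sqrt (1 - α₁ ^ 2 * h) ^ (2 * m₁ - 1)
          + Q.eval h / Real.sqrt (1 - α₂ ^ 2 * h) ^ (2 * m₂ - 1) + R.eval h)
    (hne0 : ∃ h ∈ Set.Ioo (0 : ℝ) (min (1 / α₁ ^ 2) (1 / α₂ ^ 2)), F h ≠ 0) :
    {h : ℝ | h ∈ Set.Ioo (0 : ℝ) (min (1 / α₁ ^ 2) (1 / α₂ ^ 2)) ∧ F h = 0}.Finite ∧
      {h : ℝ | h ∈ Set.Ioo (0 : ℝ) (min (1 / α₁ ^ 2) (1 / α₂ ^ 2)) ∧ F h = 0}.ncard ≤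
        4 * s + 4 * (m₁ + m₂) - 6 :=
  stmt_17_general α₁ α₂ hα₁ hα₂ s m₁ m₂ hs hm₁ hm₂ P Q R hP hQ hR F hF hne0
end
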